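/- Let X, Y : E → E be C¹ vector fields (ContDiff ℝ 1) such that X has compact support (HasCompactSupport X). Then ∫ ⟪curl X (x), Y x⟫ dx = ∫ ⟪X x, curl Y (x)⟫ dx, where the integrals are taken with respect to the volume measure on E. (Self-adjointness of the vorticity operator rot on vector fields, which gives the symmetry of the bilinear form ⟨X,Y⟩ = ∫ g(X, rot⁻¹Y) dμ of the paper.) -/

import Mathlib

/-!
Since `curl X = ∑ᵢ eᵢ ×₃ ∂ᵢX`, the pairing `⟪curl X, Y⟫` is a sum of triple products
`⟪eᵢ ×₃ ∂ᵢX, Y⟫`. Integrating by parts in each direction `eᵢ` (no boundary term, as `X` has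
compact support) moves the derivative onto `Y`, and the antisymmetry
`⟪a ×₃ u, w⟫ = -⟪u, a ×₃ w⟫` turns `-∑ᵢ ⟪eᵢ ×₃ X, ∂ᵢY⟫` into `⟪X, curl Y⟫`.
-/

open MeasureTheory RealInnerProductSpace

noncomputable section

abbrev E : Type := EuclideanSpace ℝ (Fin 3)

/-- The `i`-th standard basis vector of `E`. -/
def e (i : Fin 3) : E := EuclideanSpace.single i 1

/-- The curl (vorticity) of a vector field on `E`. -/
def curl (X : E → E) (x : E) : E :=
  (WithLp.equiv 2 (Fin 3 → ℝ)).symm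
    ![fderiv ℝ X x (e 1) 2 - fderiv ℝ X x (e 2) 1,
      fderiv ℝ X x (e 2) 0 - fderiv ℝ X x (e 0) 2,
      fderiv ℝ X x (e 0) 1 - fderiv ℝ X x (e 1) 0]

/-- The divergence of a vector field on `E`. -/
def div (X : E → E) (x : E) : ℝ := ∑ i, fderiv ℝ X x (e i) i

/-- The cross product on `E`. -/
def cross (a b : E) : E :=
  (WithLp.equiv 2 (Fin 3 → ℝ)).symm
    ![a 1 * b 2 - a 2 * b 1,
      a 2 * b 0 - a 0 * b 2,
      a 0 * b 1 - a 1 * b 0]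

infixl:74 " ×₃ " => cross

section BilinearIntegrationByParts

variable {F G W : Type*} [NormedAddCommGroup F] [NormedSpace ℝ F]
  [NormedAddCommGroup G] [NormedSpace ℝ G] [NormedAddCommGroup W] [NormedSpace ℝ W]

lemma Continuous.integrable_bilinear_of_hasCompactSupport_left {α : Type*} [TopologicalSpace α]
    [MeasurableSpace α] [OpensMeasurableSpace α] {μ : Measure α} [IsFiniteMeasureOnCompacts μ]
    (B : F →L[ℝ] G →L[ℝ] W) {f : α → F} {g : α → G} (hf : Continuous f) (hg : Continuous g)
    (hsupp : HasCompactSupport f) :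
    Integrable (fun x ↦ B (f x) (g x)) μ :=
  (B.continuous₂.comp₂ hf hg).integrable_of_hasCompactSupport <|
    hsupp.mono <| Function.support_subset_iff'.2 fun x hx ↦ by
      simp [Function.notMem_support.1 hx]

lemma integral_bilinear_fderiv_right_eq_neg_left_of_hasCompactSupport {V : Type*}
    [NormedAddCommGroup V] [NormedSpace ℝ V] [FiniteDimensional ℝ V] [MeasurableSpace V]
    [BorelSpace V] {μ : Measure V} [μ.IsAddHaarMeasure] (B : F →L[ℝ] G →L[ℝ] W)
    {f : V → F} {g : V → G} (hf : ContDiff ℝ 1 f) (hg : ContDiff ℝ 1 g)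
    (hsupp : HasCompactSupport f) (v : V) :
    ∫ x, B (f x) (fderiv ℝ g x v) ∂μ = - ∫ x, B (fderiv ℝ f x v) (g x) ∂μ := by
  have hf' : Continuous (fderiv ℝ f · v) :=
    (hf.continuous_fderiv one_ne_zero).clm_apply continuous_const
  have hg' : Continuous (fderiv ℝ g · v) :=
    (hg.continuous_fderiv one_ne_zero).clm_apply continuous_const
  exact integral_bilinear_fderiv_right_eq_neg_left_of_integrable
    (hf'.integrable_bilinear_of_hasCompactSupport_left B hg.continuous (hsupp.fderiv_apply ℝ v))
    (hf.continuous.integrable_bilinear_of_hasCompactSupport_left B hg' hsupp)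
    (hf.continuous.integrable_bilinear_of_hasCompactSupport_left B hg.continuous hsupp)
    (fun x _ ↦ hf.differentiable one_ne_zero x) (fun x _ ↦ hg.differentiable one_ne_zero x)

end BilinearIntegrationByParts

lemma cross_add (a u w : E) : a ×₃ (u + w) = a ×₃ u + a ×₃ w := by
  ext i; fin_cases i <;> simp [cross] <;> ring

lemma cross_smul (a u : E) (c : ℝ) : a ×₃ (c • u) = c • (a ×₃ u) := by
  ext i; fin_cases i <;> simp [cross] <;> ring

lemma inner_cross_left (a u w : E) : ⟪a ×₃ u, w⟫ = -⟪u, a ×₃ w⟫ := by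
  simp [cross, PiLp.inner_apply, Fin.sum_univ_three]; ring

lemma curl_eq_sum_cross (X : E → E) (x : E) : curl X x = ∑ i, e i ×₃ fderiv ℝ X x (e i) := by
  ext j; fin_cases j <;> simp [curl, cross, e, Fin.sum_univ_three] <;> ring

def crossLeft (a : E) : E →L[ℝ] E :=
  LinearMap.toContinuousLinearMap
    { toFun := cross a, map_add' := cross_add a, map_smul' := fun c u ↦ cross_smul a u c }

def tripleProduct (a : E) : E →L[ℝ] E →L[ℝ] ℝ := (innerSL ℝ).comp (crossLeft a)

@[simp]
lemma tripleProduct_apply (a u w : E) : tripleProduct a u w = ⟪a ×₃ u, w⟫ := rfl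

lemma inner_curl_left (X : E → E) (y x : E) :
    ⟪curl X x, y⟫ = ∑ i, tripleProduct (e i) (fderiv ℝ X x (e i)) y := by
  simp [curl_eq_sum_cross, sum_inner]

lemma inner_curl_right (y : E) (Y : E → E) (x : E) :
    ⟪y, curl Y x⟫ = -∑ i, tripleProduct (e i) y (fderiv ℝ Y x (e i)) := by
  simp [curl_eq_sum_cross, inner_sum, inner_cross_left, Finset.sum_neg_distrib]

theorem curl_selfAdjoint (X Y : E → E) (hX : ContDiff ℝ 1 X) (hY : ContDiff ℝ 1 Y)
    (hsupp : HasCompactSupport X) :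
    ∫ x, ⟪curl X x, Y x⟫ ∂(volume : Measure E)
      = ∫ x, ⟪X x, curl Y x⟫ ∂(volume : Measure E) := by
  have hdX (i : Fin 3) : Continuous (fderiv ℝ X · (e i)) :=
    (hX.continuous_fderiv one_ne_zero).clm_apply continuous_const
  have hdY (i : Fin 3) : Continuous (fderiv ℝ Y · (e i)) :=
    (hY.continuous_fderiv one_ne_zero).clm_apply continuous_const
  simp only [inner_curl_left, inner_curl_right]
  rw [integral_neg, integral_finsetSum _ fun i _ ↦
      (hdX i).integrable_bilinear_of_hasCompactSupport_left _ hY.continuous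
        (hsupp.fderiv_apply ℝ (e i)),
    integral_finsetSum _ fun i _ ↦
      hX.continuous.integrable_bilinear_of_hasCompactSupport_left _ (hdY i) hsupp,
    ← Finset.sum_neg_distrib]
  congr 1 with i
  rw [integral_bilinear_fderiv_right_eq_neg_left_of_hasCompactSupport _ hX hY hsupp, neg_neg]
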